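/- For any (1,β)-BM relation R, the set ψ_β(R) = ψ_β^{(1)}(R) ∪ ψ_β^{(2)}(R) has exactly 3 + 2β elements. -/

import Mathlib

open Set

/-- Signed letters: letter index together with a sign (`true` = positive). -/
abbrev V (n : ℕ) := Fin n × Bool

/-- Formal inversion of a signed letter. -/
def iv {n : ℕ} (x : V n) : V n := (x.1, !x.2)

/-- Oriented squares: tuples (a, b, a', b'). -/
abbrev Tup (α β : ℕ) := V α × V β × V α × V β

/-- The geometric square [aba'b'], as the set of its four representatives. -/
def square {α β : ℕ} (a : V α) (b : V β) (a' : V α) (b' : V β) : Set (Tup α β) :=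
  {(a, b, a', b'), (a', b', a, b), (iv a, iv b', iv a', iv b), (iv a', iv b, iv a, iv b')}

/-- The link of a set of geometric squares: the set of (horizontal, vertical)
edges contributed by the corners of the squares. -/
def link {α β : ℕ} (R : Set (Set (Tup α β))) : Set (V α × V β) :=
  {e | ∃ q ∈ R, ∃ t ∈ q, e = (iv t.1, t.2.1)}

/-- An (α,β)-BM relation: a set of α·β geometric squares whose link is the
complete bipartite graph K_{2α,2β}. -/
def IsBM (α β : ℕ) (R : Set (Set (Tup α β))) : Prop :=
  (∀ q ∈ R, ∃ a b a' b', q = square a b a' b') ∧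
  R.ncard = α * β ∧ link R = Set.univ

/-- Embedding of old vertical letters into the enlarged alphabet. -/
def up {β : ℕ} (b : V β) : V (β + 1) := (b.1.castSucc, b.2)

/-- The new vertical letter b_{β+1}. -/
def bn (β : ℕ) : V (β + 1) := (Fin.last β, true)

/-- Embedding of tuples along `up`. -/
def upT {α β : ℕ} (t : Tup α β) : Tup α (β + 1) :=
  (t.1, up t.2.1, t.2.2.1, up t.2.2.2)

/-- Embedding of a geometric square into the enlarged alphabet. -/
def upSq {α β : ℕ} (q : Set (Tup α β)) : Set (Tup α (β + 1)) := upT '' q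

/-- Embedding of a set of geometric squares into the enlarged alphabet. -/
def upR {α β : ℕ} (R : Set (Set (Tup α β))) : Set (Set (Tup α (β + 1))) := upSq '' R

/-- The generator a₁. -/
def a1 : V 1 := (0, true)

/-- ψ_β^{(1)}: adjoin one of the three squares involving only b_{β+1}. -/
def psi1 (β : ℕ) (R : Set (Set (Tup 1 β))) : Set (Set (Set (Tup 1 (β + 1)))) :=
  (fun s => upR R ∪ {s}) ''
    {square a1 (bn β) (iv a1) (iv (bn β)),
     square a1 (bn β) a1 (iv (bn β)),
     square a1 (bn β) (iv a1) (bn β)}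

/-- ψ_β^{(2)}: replace one square [aba'b'] of R by one of the two pairs
{[a b_{β+1} a' b'], [a b a' b_{β+1}⁻¹]} or {[a b_{β+1}⁻¹ a' b'], [a b a' b_{β+1}]}. -/
def psi2 (β : ℕ) (R : Set (Set (Tup 1 β))) : Set (Set (Set (Tup 1 (β + 1)))) :=
  {U | ∃ a b a' b', square a b a' b' ∈ R ∧
    (U = upR (R \ {square a b a' b'}) ∪
        {square a (bn β) a' (up b'), square a (up b) a' (iv (bn β))} ∨
     U = upR (R \ {square a b a' b'}) ∪
        {square a (iv (bn β)) a' (up b'), square a (up b) a' (bn β)})}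

/-- The map ψ_β. -/
def psi (β : ℕ) (R : Set (Set (Tup 1 β))) : Set (Set (Set (Tup 1 (β + 1)))) :=
  psi1 β R ∪ psi2 β R

/-!
Every member of ψ_β(R) remembers which squares of R it keeps: all adjoined squares involve
b_{β+1}, so pulling a member back along the embedding `upSq` gives R for the three members of
ψ^{(1)} and R ∖ {r} for the members of ψ^{(2)} built from r. The two replacement pairs of
r = [aba'b'] depend only on the geometric square, not on the chosen representative, and they
coincide only if [a b_{β+1} a' b'] = [a b a' b_{β+1}], i.e. r = [abab]. Such a square has only two
distinct corners, so the link of R would have at most 4(β - 1) + 2 < 4β edges, too few for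
K_{2,2β}.
-/

lemma Set.Finite.ncard_biUnion_le_mul {ι γ : Type*} {t : Set ι} (ht : t.Finite)
    {s : ι → Set γ} {k : ℕ} (hs : ∀ i ∈ t, (s i).ncard ≤ k) : (⋃ i ∈ t, s i).ncard ≤ t.ncard * k := by
  calc (⋃ i ∈ t, s i).ncard = (⋃ i ∈ ht.toFinset, s i).ncard := by simp
    _ ≤ ∑ i ∈ ht.toFinset, (s i).ncard := ht.toFinset.set_ncard_biUnion_le s
    _ ≤ ht.toFinset.card • k := Finset.sum_le_card_nsmul _ _ _ (by simpa using hs)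
    _ = t.ncard * k := by rw [smul_eq_mul, ncard_eq_toFinset_card t ht]

lemma Set.Finite.ncard_biUnion_of_ncard_eq {ι γ : Type*} {t : Set ι} (ht : t.Finite)
    {s : ι → Set γ} {k : ℕ} (hs : ∀ i ∈ t, (s i).ncard = k) (hfin : ∀ i ∈ t, (s i).Finite)
    (hd : t.PairwiseDisjoint s) : (⋃ i ∈ t, s i).ncard = t.ncard * k := by
  rw [ht.ncard_biUnion hfin hd, finsum_mem_congr rfl hs, finsum_mem_eq_finite_toFinset_sum _ ht,
    Finset.sum_const, smul_eq_mul, ncard_eq_toFinset_card t ht]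

section Letters

variable {β : ℕ}

@[simp] lemma iv_iv {n : ℕ} (x : V n) : iv (iv x) = x := by simp [iv]

@[simp] lemma iv_ne_self {n : ℕ} (x : V n) : iv x ≠ x := by simp [iv, Prod.ext_iff]

@[simp] lemma self_ne_iv {n : ℕ} (x : V n) : x ≠ iv x := (iv_ne_self x).symm

@[simp] lemma iv_up (b : V β) : iv (up b) = up (iv b) := rfl

lemma up_injective : Function.Injective (up (β := β)) := fun _ _ h =>
  Prod.ext (Fin.castSucc_injective _ (congrArg Prod.fst h)) (congrArg Prod.snd h :)

@[simp] lemma up_ne_bn (b : V β) : up b ≠ bn β :=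
  fun h => Fin.castSucc_ne_last _ (congrArg Prod.fst h)

@[simp] lemma up_ne_iv_bn (b : V β) : up b ≠ iv (bn β) :=
  fun h => Fin.castSucc_ne_last _ (congrArg Prod.fst h)

end Letters

section Square

variable {α β : ℕ}

lemma square_comm (a : V α) (b : V β) (a' : V α) (b' : V β) :
    square a b a' b' = square a' b' a b := by
  ext t; simp only [square, mem_insert_iff, mem_singleton_iff]; tauto

lemma square_iv (a : V α) (b : V β) (a' : V α) (b' : V β) :
    square a b a' b' = square (iv a) (iv b') (iv a') (iv b) := by
  ext t; simp only [square, mem_insert_iff, mem_singleton_iff, iv_iv]; tauto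

lemma mem_square_self (a : V α) (b : V β) (a' : V α) (b' : V β) :
    (a, b, a', b') ∈ square a b a' b' :=
  mem_insert _ _

lemma square_eq_square_iff {a c : V α} {b d : V β} {a' c' : V α} {b' d' : V β} :
    square a b a' b' = square c d c' d' ↔ (c, d, c', d') ∈ square a b a' b' := by
  refine ⟨fun h => h ▸ mem_square_self c d c' d', fun h => ?_⟩
  simp only [square, mem_insert_iff, mem_singleton_iff, Prod.mk.injEq] at h
  rcases h with ⟨rfl, rfl, rfl, rfl⟩ | ⟨rfl, rfl, rfl, rfl⟩ | ⟨rfl, rfl, rfl, rfl⟩ |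
    ⟨rfl, rfl, rfl, rfl⟩
  · rfl
  · exact square_comm _ _ _ _
  · exact square_iv _ _ _ _
  · exact (square_comm _ _ _ _).trans (square_iv _ _ _ _)

end Square

section Link

variable {α β : ℕ}

def corners (q : Set (Tup α β)) : Set (V α × V β) := (fun t => (iv t.1, t.2.1)) '' q

lemma link_eq_biUnion (R : Set (Set (Tup α β))) : link R = ⋃ q ∈ R, corners q := by
  ext e; simp [link, corners, eq_comm]

lemma corners_square (a : V α) (b : V β) (a' : V α) (b' : V β) :
    corners (square a b a' b') = {(iv a, b), (iv a', b'), (a, iv b'), (a', iv b)} := by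
  simp [corners, square, image_insert_eq]

lemma ncard_corners_square_le (a : V α) (b : V β) (a' : V α) (b' : V β) :
    (corners (square a b a' b')).ncard ≤ 4 := by
  rw [corners_square]
  have := Finset.card_le_four (a := (iv a, b)) (b := (iv a', b')) (c := (a, iv b'))
    (d := (a', iv b))
  rwa [← ncard_coe_finset, Finset.coe_insert, Finset.coe_insert, Finset.coe_pair] at this

lemma ncard_corners_square_self_le (a : V α) (b : V β) :
    (corners (square a b a b)).ncard ≤ 2 := by
  rw [corners_square, insert_idem, pair_eq_singleton]
  exact (ncard_insert_le _ _).trans (by rw [ncard_singleton])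

end Link

lemma IsBM.square_self_notMem {α β : ℕ} {R : Set (Set (Tup α β))} (hR : IsBM α β R)
    (a : V α) (b : V β) : square a b a b ∉ R := by
  intro hmem
  obtain ⟨hsq, hcard, hlink⟩ := hR
  have hsplit :
      link R = corners (square a b a b) ∪ ⋃ q ∈ R \ {square a b a b}, corners q := by
    rw [link_eq_biUnion, ← biUnion_insert, insert_sdiff_singleton, insert_eq_of_mem hmem]
  have hrest : (⋃ q ∈ R \ {square a b a b}, corners q).ncard ≤ (α * β - 1) * 4 := by
    rw [← hcard, ← ncard_sdiff_singleton_of_mem hmem]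
    refine (toFinite _).ncard_biUnion_le_mul fun q hq => ?_
    obtain ⟨c, d, c', d', rfl⟩ := hsq q hq.1
    exact ncard_corners_square_le c d c' d'
  have huniv : (univ : Set (V α × V β)).ncard = 4 * (α * β) := by
    rw [ncard_univ, Nat.card_eq_fintype_card]
    simp only [Fintype.card_prod, Fintype.card_fin, Fintype.card_bool]
    ring
  have hpos : 0 < α * β := Nat.mul_pos a.1.pos b.1.pos
  have hle := ncard_union_le (corners (square a b a b))
    (⋃ q ∈ R \ {square a b a b}, corners q)
  rw [← hsplit, hlink, huniv] at hle
  have hself := ncard_corners_square_self_le a b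
  generalize α * β = n at *
  omega

section Split

variable {α β : ℕ}

def splitPos (a : V α) (b : V β) (a' : V α) (b' : V β) : Set (Set (Tup α (β + 1))) :=
  {square a (bn β) a' (up b'), square a (up b) a' (iv (bn β))}

def splitNeg (a : V α) (b : V β) (a' : V α) (b' : V β) : Set (Set (Tup α (β + 1))) :=
  {square a (iv (bn β)) a' (up b'), square a (up b) a' (bn β)}

lemma splitPos_swap (a : V α) (b : V β) (a' : V α) (b' : V β) :
    splitPos a' b' a b = splitNeg a b a' b' := by
  rw [splitPos, splitNeg, square_comm a' (bn β), square_comm a' (up b'), pair_comm]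

lemma splitPos_iv (a : V α) (b : V β) (a' : V α) (b' : V β) :
    splitPos (iv a) (iv b') (iv a') (iv b) = splitPos a b a' b' := by
  rw [splitPos, splitPos, square_iv a (bn β), square_iv a (up b), pair_comm]
  simp only [iv_iv, iv_up]

lemma splitNeg_iv (a : V α) (b : V β) (a' : V α) (b' : V β) :
    splitNeg (iv a) (iv b') (iv a') (iv b) = splitNeg a b a' b' := by
  rw [← splitPos_swap, ← splitPos_swap, splitPos_iv]

lemma pair_splitPos_splitNeg_eq {a c : V α} {b d : V β} {a' c' : V α} {b' d' : V β}
    (h : (c, d, c', d') ∈ square a b a' b') :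
    ({splitPos c d c' d', splitNeg c d c' d'} : Set (Set (Set (Tup α (β + 1))))) =
      {splitPos a b a' b', splitNeg a b a' b'} := by
  simp only [square, mem_insert_iff, mem_singleton_iff, Prod.mk.injEq] at h
  rcases h with ⟨rfl, rfl, rfl, rfl⟩ | ⟨rfl, rfl, rfl, rfl⟩ | ⟨rfl, rfl, rfl, rfl⟩ |
    ⟨rfl, rfl, rfl, rfl⟩
  · rfl
  · rw [splitPos_swap c d c' d', ← splitPos_swap c' d' c d, pair_comm]
  · rw [splitPos_iv, splitNeg_iv]
  · rw [splitPos_iv, splitNeg_iv, splitPos_swap a b a' b', ← splitPos_swap a' b' a b, pair_comm]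

def splits (q : Set (Tup α β)) : Set (Set (Set (Tup α (β + 1)))) :=
  {P | ∃ a b a' b', q = square a b a' b' ∧
    P ∈ ({splitPos a b a' b', splitNeg a b a' b'} : Set _)}

lemma splits_square (a : V α) (b : V β) (a' : V α) (b' : V β) :
    splits (square a b a' b') = {splitPos a b a' b', splitNeg a b a' b'} := by
  ext P
  refine ⟨?_, fun hP => ⟨a, b, a', b', rfl, hP⟩⟩
  rintro ⟨c, d, c', d', h, hP⟩
  rwa [pair_splitPos_splitNeg_eq (square_eq_square_iff.1 h)] at hP

end Split

lemma IsBM.splitPos_ne_splitNeg {α β : ℕ} {R : Set (Set (Tup α β))} (hR : IsBM α β R)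
    {a : V α} {b : V β} {a' : V α} {b' : V β} (h : square a b a' b' ∈ R) :
    splitPos a b a' b' ≠ splitNeg a b a' b' := by
  intro hEq
  have hmem : square a (bn β) a' (up b') ∈ splitNeg a b a' b' := hEq ▸ mem_insert _ _
  simp only [splitNeg, mem_insert_iff, mem_singleton_iff, square_eq_square_iff] at hmem
  simp only [square, iv_up, mem_insert_iff, Prod.mk.injEq, iv_ne_self, and_true, and_false,
    up_ne_bn, self_ne_iv, up_ne_iv_bn, and_self, mem_singleton_iff, up_injective.eq_iff, or_self,
    true_and, false_and, or_false, false_or] at hmem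
  obtain ⟨rfl, rfl, -⟩ := hmem
  exact hR.square_self_notMem a b h

section Embedding

variable {α β : ℕ}

lemma upSq_injective : Function.Injective (upSq (α := α) (β := β)) := by
  refine image_injective.2 ?_
  rintro ⟨a, b, a', b'⟩ ⟨c, d, c', d'⟩ h
  simp only [upT, Prod.mk.injEq, up_injective.eq_iff] at h
  obtain ⟨rfl, rfl, rfl, rfl⟩ := h
  rfl

lemma square_notMem_range_upSq {x x' : V α} {y y' : V (β + 1)} (hy : y.1 = Fin.last β) :
    square x y x' y' ∉ range (upSq (α := α) (β := β)) := by
  rintro ⟨q, hq⟩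
  obtain ⟨t, -, ht⟩ : (x, y, x', y') ∈ upSq q := hq ▸ mem_square_self x y x' y'
  simp only [upT, Prod.mk.injEq] at ht
  exact Fin.castSucc_ne_last _ (ht.2.1 ▸ hy)

lemma square_notMem_range_upSq' {x x' : V α} {y y' : V (β + 1)} (hy' : y'.1 = Fin.last β) :
    square x y x' y' ∉ range (upSq (α := α) (β := β)) :=
  square_comm x y x' y' ▸ square_notMem_range_upSq hy'

lemma disjoint_range_upSq_of_mem_splits {q : Set (Tup α β)} {P : Set (Set (Tup α (β + 1)))}
    (hP : P ∈ splits q) : Disjoint P (range upSq) := by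
  obtain ⟨a, b, a', b', -, hP | hP⟩ := hP <;> subst hP <;>
    rw [disjoint_left] <;> rintro _ (rfl | rfl)
  exacts [square_notMem_range_upSq rfl, square_notMem_range_upSq' rfl,
    square_notMem_range_upSq rfl, square_notMem_range_upSq' rfl]

variable {S : Set (Set (Tup α β))} {P : Set (Set (Tup α (β + 1)))}

lemma preimage_upSq_upR_union (hP : Disjoint P (range upSq)) : upSq ⁻¹' (upR S ∪ P) = S := by
  rw [preimage_union, upR, upSq_injective.preimage_image, preimage_eq_empty hP, union_empty]

lemma upR_union_sdiff_range (hP : Disjoint P (range upSq)) :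
    (upR S ∪ P) \ range upSq = P := by
  rw [union_sdiff_distrib, upR, sdiff_eq_empty.2 (image_subset_range _ _), empty_union,
    hP.sdiff_eq_left]

lemma injOn_upR_union :
    InjOn (upR S ∪ ·) {P | Disjoint P (range (upSq (α := α) (β := β)))} :=
  fun P hP P' hP' h => by
    rw [← upR_union_sdiff_range (S := S) hP, ← upR_union_sdiff_range (S := S) hP']
    exact congrArg (· \ range upSq) h

lemma preimage_upSq_of_mem_image_splits {q : Set (Tup α β)} {U : Set (Set (Tup α (β + 1)))}
    (hU : U ∈ (upR S ∪ ·) '' splits q) : upSq ⁻¹' U = S := by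
  obtain ⟨P, hP, rfl⟩ := hU
  exact preimage_upSq_upR_union (disjoint_range_upSq_of_mem_splits hP)

end Embedding

section Psi

variable {β : ℕ} {R : Set (Set (Tup 1 β))}

lemma IsBM.ncard_splits (hR : IsBM 1 β R) {q : Set (Tup 1 β)} (hq : q ∈ R) :
    (splits q).ncard = 2 := by
  obtain ⟨a, b, a', b', rfl⟩ := hR.1 q hq
  rw [splits_square, ncard_pair (hR.splitPos_ne_splitNeg hq)]

lemma psi2_eq_biUnion (R : Set (Set (Tup 1 β))) :
    psi2 β R = ⋃ q ∈ R, (upR (R \ {q}) ∪ ·) '' splits q := by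
  ext U
  constructor
  · rintro ⟨a, b, a', b', hq, rfl | rfl⟩
    exacts [mem_biUnion hq ⟨_, ⟨a, b, a', b', rfl, Or.inl rfl⟩, rfl⟩,
      mem_biUnion hq ⟨_, ⟨a, b, a', b', rfl, Or.inr rfl⟩, rfl⟩]
  · simp only [mem_iUnion]
    rintro ⟨q, hq, P, ⟨a, b, a', b', rfl, hP⟩, rfl⟩
    exact ⟨a, b, a', b', hq, hP.imp (congrArg _) (congrArg _)⟩

lemma preimage_upSq_of_mem_psi1 {U : Set (Set (Tup 1 (β + 1)))} (hU : U ∈ psi1 β R) :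
    upSq ⁻¹' U = R := by
  obtain ⟨s, hs, rfl⟩ := hU
  refine preimage_upSq_upR_union (disjoint_singleton_left.2 ?_)
  rcases hs with rfl | rfl | rfl <;> exact square_notMem_range_upSq rfl

lemma ncard_psi1 (R : Set (Set (Tup 1 β))) : (psi1 β R).ncard = 3 := by
  rw [psi1, InjOn.ncard_image, ncard_eq_three]
  · refine ⟨_, _, _, ?_, ?_, ?_, rfl⟩ <;> rw [Ne, square_eq_square_iff] <;>
      simp [square, a1, bn, iv]
  · intro s hs t ht h
    have hnew {x : V 1} {y' : V (β + 1)} :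
        Disjoint {square a1 (bn β) x y'} (range (upSq (α := 1) (β := β))) :=
      disjoint_singleton_left.2 (square_notMem_range_upSq rfl)
    rcases hs with rfl | rfl | rfl <;> rcases ht with rfl | rfl | rfl <;>
      exact singleton_injective (injOn_upR_union hnew hnew h)

lemma IsBM.ncard_psi2 (hR : IsBM 1 β R) : (psi2 β R).ncard = 2 * β := by
  rw [psi2_eq_biUnion, (toFinite R).ncard_biUnion_of_ncard_eq (k := 2) ?_
    (fun _ _ => toFinite _) ?_, hR.2.1, one_mul, mul_comm]
  · intro q hq
    rw [(injOn_upR_union.mono fun P hP =>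
      disjoint_range_upSq_of_mem_splits hP).ncard_image, hR.ncard_splits hq]
  · intro q hq q' hq' hne
    rw [Function.onFun, disjoint_left]
    intro U hU hU'
    have hsame := (preimage_upSq_of_mem_image_splits hU).symm.trans
      (preimage_upSq_of_mem_image_splits hU')
    exact (hsame ▸ ⟨hq, hne⟩ : q ∈ R \ {q}).2 rfl

lemma disjoint_psi1_psi2 (R : Set (Set (Tup 1 β))) : Disjoint (psi1 β R) (psi2 β R) := by
  rw [psi2_eq_biUnion, disjoint_iUnion₂_right]
  intro q hq
  rw [disjoint_left]
  intro U h1 h2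
  have hsame := (preimage_upSq_of_mem_psi1 h1).symm.trans (preimage_upSq_of_mem_image_splits h2)
  exact (hsame ▸ hq : q ∈ R \ {q}).2 rfl

end Psi

/-- For any (1,β)-BM relation R, the set ψ_β(R) has exactly 3 + 2β elements. -/
theorem psi_card {β : ℕ} (R : Set (Set (Tup 1 β))) (hR : IsBM 1 β R) :
    (psi β R).ncard = 3 + 2 * β := by
  rw [psi, ncard_union_eq (disjoint_psi1_psi2 R) (toFinite _) (toFinite _), ncard_psi1,
    hR.ncard_psi2]
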